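/- Define u₀ : [0,∞) → ℝ by u₀(s) = tanh(s) · ∫₀^s tanh(t)⁻² (∫₀^t tanh²(r) dr) dt for s > 0 and u₀(0) = 0. Then u₀''(s) + 2 cosh⁻²(s) u₀(s) = tanh(s) for all s > 0, and u₀ satisfies the quadratic growth bound |u₀(s)| ≤ 1 + s² for all s ≥ 0. -/

import Mathlib

/-!
`tanh` lies in the kernel of `L̃`: `tanh'' = -2 cosh⁻² · tanh`. Writing `u₀ = tanh · F` is therefore
a reduction of order: whenever `φ'' + qφ = 0`, `(φF)'' + qφF = 2φ'F' + φF'' = (φ²F')' / φ`, and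
`F' = tanh⁻² ∫₀ᵗ tanh²` makes `(tanh² F')' = tanh²`, so `L̃u₀ = tanh`.

For the bound, `tanh²` increases on `[0, ∞)`, so `0 ≤ ∫₀ᵗ tanh² ≤ t tanh² t`, i.e. `0 ≤ F' ≤ t`.
Hence `0 ≤ F(s) ≤ s²/2`, and `|u₀(s)| ≤ s²/2` because `0 ≤ tanh ≤ 1`.
-/

open Real Filter Topology Set MeasureTheory intervalIntegral

namespace Real

theorem hasDerivAt_tanh (x : ℝ) : HasDerivAt tanh (cosh x ^ 2)⁻¹ x := by
  rw [show tanh = fun y => sinh y / cosh y from funext tanh_eq_sinh_div_cosh]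
  refine ((hasDerivAt_sinh x).div (hasDerivAt_cosh x) (cosh_pos x).ne').congr_deriv ?_
  field_simp
  linear_combination cosh_sq_sub_sinh_sq x

theorem continuous_tanh : Continuous tanh :=
  continuous_iff_continuousAt.2 fun x => (hasDerivAt_tanh x).continuousAt

theorem hasDerivAt_inv_cosh_sq (x : ℝ) :
    HasDerivAt (fun y => (cosh y ^ 2)⁻¹) (-(2 * (cosh x ^ 2)⁻¹ * tanh x)) x := by
  refine (((hasDerivAt_cosh x).pow 2).inv (pow_pos (cosh_pos x) 2).ne').congr_deriv ?_
  rw [tanh_eq_sinh_div_cosh, Pi.pow_apply]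
  field_simp
  ring

theorem tanh_strictMono : StrictMono tanh :=
  strictMono_of_deriv_pos fun x => by rw [(hasDerivAt_tanh x).deriv]; positivity

theorem tanh_pos {x : ℝ} (hx : 0 < x) : 0 < tanh x := by
  simpa using tanh_strictMono hx

theorem tanh_nonneg {x : ℝ} (hx : 0 ≤ x) : 0 ≤ tanh x := by
  simpa using tanh_strictMono.monotone hx

end Real

section ReductionOfOrder

variable {φ φ' q : ℝ → ℝ} {s : ℝ}

theorem deriv_deriv_mul_add_eq {F F' : ℝ → ℝ} {F'' : ℝ}
    (hφ : ∀ᶠ t in 𝓝 s, HasDerivAt φ (φ' t) t) (hφ' : HasDerivAt φ' (-(q s * φ s)) s)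
    (hF : ∀ᶠ t in 𝓝 s, HasDerivAt F (F' t) t) (hF' : HasDerivAt F' F'' s) :
    deriv (deriv fun t => φ t * F t) s + q s * (φ s * F s) = 2 * φ' s * F' s + φ s * F'' := by
  have hderiv : deriv (fun t => φ t * F t) =ᶠ[𝓝 s] fun t => φ' t * F t + φ t * F' t := by
    filter_upwards [hφ, hF] with t hφt hFt
    exact (hφt.mul hFt).deriv
  have h2 : HasDerivAt (fun t => φ' t * F t + φ t * F' t)
      (-(q s * φ s) * F s + φ' s * F' s + (φ' s * F' s + φ s * F'')) s :=
    (hφ'.mul hF.self_of_nhds).add (hφ.self_of_nhds.mul hF')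
  rw [hderiv.deriv_eq, h2.deriv]
  ring

theorem hasDerivAt_inv_sq_mul {I : ℝ → ℝ} {f : ℝ} (hφ : HasDerivAt φ (φ' s) s)
    (hI : HasDerivAt I (φ s * f) s) (hφs : φ s ≠ 0) :
    HasDerivAt (fun t => (φ t ^ 2)⁻¹ * I t) ((f - 2 * φ' s * ((φ s ^ 2)⁻¹ * I s)) / φ s) s := by
  refine (((hφ.pow 2).inv (pow_ne_zero 2 hφs)).mul hI).congr_deriv ?_
  simp only [Pi.inv_apply, Pi.pow_apply]
  field_simp
  ring

variable {I f : ℝ → ℝ} {a : ℝ}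

theorem deriv_deriv_mul_integral_add_eq
    (hφ : ∀ t > a, HasDerivAt φ (φ' t) t) (hφ' : HasDerivAt φ' (-(q s * φ s)) s)
    (hI : ∀ t > a, HasDerivAt I (φ t * f t) t) (hφ0 : ∀ t > a, φ t ≠ 0)
    (hint : ∀ t > a, IntervalIntegrable (fun t => (φ t ^ 2)⁻¹ * I t) volume a t) (hs : a < s) :
    deriv (deriv fun s => φ s * ∫ t in a..s, (φ t ^ 2)⁻¹ * I t) s
      + q s * (φ s * ∫ t in a..s, (φ t ^ 2)⁻¹ * I t) = f s := by
  set g := fun t => (φ t ^ 2)⁻¹ * I t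
  have hg : ∀ t > a, HasDerivAt g ((f t - 2 * φ' t * g t) / φ t) t := fun t ht =>
    hasDerivAt_inv_sq_mul (hφ t ht) (hI t ht) (hφ0 t ht)
  have hgc : ContinuousOn g (Ioi a) := fun t ht => (hg t ht).continuousAt.continuousWithinAt
  have hF : ∀ t > a, HasDerivAt (fun s => ∫ t in a..s, g t) (g t) t := fun t ht =>
    integral_hasDerivAt_right (hint t ht)
      (hgc.stronglyMeasurableAtFilter isOpen_Ioi t ht) (hgc.continuousAt (Ioi_mem_nhds ht))
  rw [deriv_deriv_mul_add_eq (eventually_gt_nhds hs |>.mono hφ) hφ'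
    (eventually_gt_nhds hs |>.mono hF) (hg s hs)]
  field_simp [hφ0 s hs]
  ring

end ReductionOfOrder

theorem hasDerivAt_integral_tanh_sq (t : ℝ) :
    HasDerivAt (fun t => ∫ r in (0 : ℝ)..t, tanh r ^ 2) (tanh t * tanh t) t :=
  ((continuous_tanh.pow 2).integral_hasStrictDerivAt 0 t).hasDerivAt.congr_deriv (sq _)

theorem integral_tanh_sq_le {t : ℝ} (ht : 0 ≤ t) : ∫ r in (0 : ℝ)..t, tanh r ^ 2 ≤ t * tanh t ^ 2 :=
  calc ∫ r in (0 : ℝ)..t, tanh r ^ 2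
      ≤ ∫ _ in (0 : ℝ)..t, tanh t ^ 2 :=
        integral_mono_on ht ((continuous_tanh.pow 2).intervalIntegrable 0 t)
          intervalIntegrable_const fun r hr =>
            pow_le_pow_left₀ (tanh_nonneg hr.1) (tanh_strictMono.monotone hr.2) 2
    _ = t * tanh t ^ 2 := by simp

theorem inv_tanh_sq_mul_integral_mem_Icc {t : ℝ} (ht : 0 ≤ t) :
    (tanh t ^ 2)⁻¹ * ∫ r in (0 : ℝ)..t, tanh r ^ 2 ∈ Icc 0 t := by
  refine ⟨mul_nonneg (by positivity) (integral_nonneg ht fun r _ => sq_nonneg _), ?_⟩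
  rcases ht.eq_or_lt with rfl | ht
  · simp
  · rw [inv_mul_le_iff₀ (pow_pos (tanh_pos ht) 2), mul_comm]
    exact integral_tanh_sq_le ht.le

theorem intervalIntegrable_inv_tanh_sq_mul_integral {s : ℝ} (hs : 0 ≤ s) :
    IntervalIntegrable (fun t => (tanh t ^ 2)⁻¹ * ∫ r in (0 : ℝ)..t, tanh r ^ 2) volume 0 s := by
  rw [intervalIntegrable_iff, uIoc_of_le hs]
  refine Measure.integrableOn_of_bounded (M := s) (by simp) ?_ ?_
  · exact ((continuous_tanh.pow 2).measurable.inv.mul (continuous_iff_continuousAt.2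
      fun t => (hasDerivAt_integral_tanh_sq t).continuousAt).measurable).aestronglyMeasurable
  · filter_upwards [ae_restrict_mem measurableSet_Ioc] with t ht
    have hmem := inv_tanh_sq_mul_integral_mem_Icc ht.1.le
    rw [Real.norm_eq_abs, abs_of_nonneg hmem.1]
    exact hmem.2.trans ht.2

theorem abs_tanh_mul_integral_le {s : ℝ} (hs : 0 ≤ s) :
    |tanh s * ∫ t in (0 : ℝ)..s, (tanh t ^ 2)⁻¹ * ∫ r in (0 : ℝ)..t, tanh r ^ 2| ≤ s ^ 2 / 2 := by
  have hF_nonneg : 0 ≤ ∫ t in (0 : ℝ)..s, (tanh t ^ 2)⁻¹ * ∫ r in (0 : ℝ)..t, tanh r ^ 2 :=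
    integral_nonneg hs fun t ht => (inv_tanh_sq_mul_integral_mem_Icc ht.1).1
  have hF_le : ∫ t in (0 : ℝ)..s, (tanh t ^ 2)⁻¹ * ∫ r in (0 : ℝ)..t, tanh r ^ 2 ≤ s ^ 2 / 2 :=
    calc _ ≤ ∫ t in (0 : ℝ)..s, t :=
          integral_mono_on hs (intervalIntegrable_inv_tanh_sq_mul_integral hs)
            intervalIntegrable_id fun t ht => (inv_tanh_sq_mul_integral_mem_Icc ht.1).2
      _ = s ^ 2 / 2 := by simp
  rw [abs_of_nonneg (mul_nonneg (tanh_nonneg hs) hF_nonneg)]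
  exact (mul_le_of_le_one_left hF_nonneg (tanh_lt_one s).le).trans hF_le

/-- The particular solution `u₀` of `L̃ u = tanh` obtained by variation of parameters
with zero Dirichlet condition at `s = 0` satisfies the ODE on `(0,∞)` and the
quadratic growth bound `|u₀(s)| ≤ 1 + s²` for `s ≥ 0`. -/
theorem u_zero_solves_and_grows_quadratically :
    let u₀ : ℝ → ℝ := fun s =>
      Real.tanh s *
        ∫ t in (0:ℝ)..s, ((Real.tanh t)^2)⁻¹ * ∫ r in (0:ℝ)..t, (Real.tanh r)^2
    (∀ s > (0:ℝ),
      deriv (deriv u₀) s + 2 * ((Real.cosh s)^2)⁻¹ * u₀ s = Real.tanh s) ∧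
    (∀ s ≥ (0:ℝ), |u₀ s| ≤ 1 + s^2) := by
  intro u₀
  refine ⟨fun s hs => ?_, fun s hs => ?_⟩
  · exact deriv_deriv_mul_integral_add_eq (q := fun s => 2 * (cosh s ^ 2)⁻¹)
      (fun t _ => hasDerivAt_tanh t) (hasDerivAt_inv_cosh_sq s)
      (fun t _ => hasDerivAt_integral_tanh_sq t) (fun t ht => (tanh_pos ht).ne')
      (fun t ht => intervalIntegrable_inv_tanh_sq_mul_integral ht.le) hs
  · calc |u₀ s| ≤ s ^ 2 / 2 := abs_tanh_mul_integral_le hs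
      _ ≤ 1 + s ^ 2 := by linarith [sq_nonneg s]
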